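/- For every t > 0 and x ∈ X, the supremum over all minimizing sequences (y_n) of F(t,x;·) of limsup_n d(x,y_n) is finite and is attained by some minimizing sequence; likewise, the infimum over all minimizing sequences of liminf_n d(x,y_n) is attained by some minimizing sequence. In particular D⁺_t(x) and D⁻_t(x) are well-defined finite real numbers. -/
import Mathlib


/-!
Setting: `(X, d)` is a complete length metric space, `f : X × X → ℝ` is lower
semicontinuous, bounded from below, and satisfies the reverse triangle inequality
`f(x,z) ≥ f(x,y) + f(y,z)`.  For `t > 0` set `F(t,x;y) := f(x,y) + d(x,y)²/(2t)`,
`f_t(x) := inf_y F(t,x;y)`, and `f_0(x) := f(x,x)`.  `D⁺_t(x)` (resp. `D⁻_t(x)`)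
is the largest (resp. smallest) value of `limsup_n d(x,y_n)` (resp. `liminf_n d(x,y_n)`)
among minimizing sequences `(y_n)` of `F(t,x;·)`.
-/

open Filter Topology Metric MeasureTheory
open scoped ENNReal NNReal

noncomputable section

/-- A metric space is a *length space* if the distance between any two points equals the
infimum of the lengths (total variations) of continuous curves joining them. -/
def IsLengthSpace (X : Type*) [MetricSpace X] : Prop :=
  ∀ x y : X,
    ENNReal.ofReal (dist x y) =
      ⨅ γ : { γ : ℝ → X // ContinuousOn γ (Set.Icc 0 1) ∧ γ 0 = x ∧ γ 1 = y },
        eVariationOn γ.1 (Set.Icc 0 1)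

variable {X : Type*} [MetricSpace X]

/-- `FH f t x y = f(x,y) + d(x,y)² / (2t)`. -/
def FH (f : X × X → ℝ) (t : ℝ) (x y : X) : ℝ :=
  f (x, y) + dist x y ^ 2 / (2 * t)

/-- `ft f t x = inf_y (f(x,y) + d(x,y)²/(2t))` for `t ≠ 0`, and `ft f 0 x = f(x,x)`. -/
def ft (f : X × X → ℝ) (t : ℝ) (x : X) : ℝ :=
  if t = 0 then f (x, x) else ⨅ y : X, FH f t x y

/-- `y : ℕ → X` is a minimizing sequence for `F(t,x;·)`. -/
def MinSeq (f : X × X → ℝ) (t : ℝ) (x : X) (y : ℕ → X) : Prop :=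
  Tendsto (fun n => FH f t x (y n)) atTop (𝓝 (ft f t x))

/-- `D⁺_t(x)`: the largest value of `limsup_n d(x, y_n)` among minimizing sequences. -/
def Dplus (f : X × X → ℝ) (t : ℝ) (x : X) : ℝ :=
  sSup { L : ℝ | ∃ y : ℕ → X, MinSeq f t x y ∧
    Filter.limsup (fun n => dist x (y n)) atTop = L }

/-- `D⁻_t(x)`: the smallest value of `liminf_n d(x, y_n)` among minimizing sequences. -/
def Dminus (f : X × X → ℝ) (t : ℝ) (x : X) : ℝ :=
  sInf { L : ℝ | ∃ y : ℕ → X, MinSeq f t x y ∧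
    Filter.liminf (fun n => dist x (y n)) atTop = L }

/-- Descending slope `|∂⁻ g|(x) = limsup_{y→x} (g(y) - g(x))⁻ / d(x,y)`, valued in `[0,∞]`. -/
def descSlope (g : X → ℝ) (x : X) : ℝ≥0∞ :=
  Filter.limsup (fun y => ENNReal.ofReal ((g x - g y) / dist x y)) (𝓝[≠] x)

/-- The tilt `tilt(f)(x) = limsup_{y→x} (f(x,y))⁻ / d(x,y)`, valued in `[0,∞]`. -/
def tilt (f : X × X → ℝ) (x : X) : ℝ≥0∞ :=
  Filter.limsup (fun y => ENNReal.ofReal ((-f (x, y)) / dist x y)) (𝓝[≠] x)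

/-- For every `t > 0` and `x ∈ X`: along any minimizing sequence the distances `d(x,y_n)`
are bounded, the supremum of `limsup_n d(x,y_n)` over minimizing sequences is attained
(and equals `D⁺_t(x)`), and the infimum of `liminf_n d(x,y_n)` over minimizing sequences
is attained (and equals `D⁻_t(x)`); in particular `D⁺_t(x)` and `D⁻_t(x)` are
well-defined finite real numbers. -/
theorem statement2 [CompleteSpace X] (hX : IsLengthSpace X)
    (f : X × X → ℝ) (hlsc : LowerSemicontinuous f)
    (hbdd : ∃ C : ℝ, ∀ p : X × X, C ≤ f p)
    (hrev : ∀ x y z : X, f (x, y) + f (y, z) ≤ f (x, z))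
    (t : ℝ) (ht : 0 < t) (x : X) :
    (∀ y : ℕ → X, MinSeq f t x y → BddAbove (Set.range fun n => dist x (y n))) ∧
    (∃ y : ℕ → X, MinSeq f t x y ∧
      Filter.limsup (fun n => dist x (y n)) atTop = Dplus f t x ∧
      ∀ z : ℕ → X, MinSeq f t x z →
        Filter.limsup (fun n => dist x (z n)) atTop ≤
          Filter.limsup (fun n => dist x (y n)) atTop) ∧
    (∃ y : ℕ → X, MinSeq f t x y ∧
      Filter.liminf (fun n => dist x (y n)) atTop = Dminus f t x ∧
      ∀ z : ℕ → X, MinSeq f t x z →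
        Filter.liminf (fun n => dist x (y n)) atTop ≤
          Filter.liminf (fun n => dist x (z n)) atTop) := by

  have ht0 : t ≠ 0 := ne_of_gt ht
  obtain ⟨C, hC⟩ := hbdd
  have h2t : (0:ℝ) < 2 * t := by linarith
  have hCle : ∀ y : X, C ≤ FH f t x y := by
    intro y
    have h1 : (0:ℝ) ≤ dist x y ^ 2 / (2 * t) := div_nonneg (sq_nonneg _) h2t.le
    have h2 := hC (x, y)
    simp only [FH]; linarith
  have hbb : BddBelow (Set.range (FH f t x)) := ⟨C, by rintro _ ⟨y, rfl⟩; exact hCle y⟩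
  have hfteq : ft f t x = ⨅ y : X, FH f t x y := if_neg ht0
  have hftle : ∀ y : X, ft f t x ≤ FH f t x y := by
    intro y; rw [hfteq]; exact ciInf_le hbb y
  have hdistb : ∀ (y : X) (M : ℝ), FH f t x y ≤ M → dist x y ≤ Real.sqrt (2*t*(M - C)) := by
    intro y M hM
    have h2 := hC (x, y)
    have hd : dist x y ^ 2 / (2*t) ≤ M - C := by simp only [FH] at hM; linarith
    have h1 : dist x y ^ 2 ≤ 2*t*(M - C) := by
      have := (div_le_iff₀ h2t).mp hd
      linarith
    calc dist x y = Real.sqrt (dist x y ^ 2) := (Real.sqrt_sq dist_nonneg).symm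
      _ ≤ _ := Real.sqrt_le_sqrt h1
  -- coboundedness / boundedness facts for distance sequences
  have hdist_bddBelow : ∀ y : ℕ → X,
      IsBoundedUnder (· ≥ ·) atTop (fun n => dist x (y n)) :=
    fun y => isBoundedUnder_of ⟨0, fun n => dist_nonneg⟩
  have hdist_cob_le : ∀ y : ℕ → X,
      IsCoboundedUnder (· ≤ ·) atTop (fun n => dist x (y n)) :=
    fun y => (hdist_bddBelow y).isCoboundedUnder_le
  -- part 1: bounded distances
  have part1 : ∀ y : ℕ → X, MinSeq f t x y → BddAbove (Set.range fun n => dist x (y n)) := by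
    intro y hy
    obtain ⟨M, hM⟩ := hy.bddAbove_range
    refine ⟨Real.sqrt (2*t*(M - C)), ?_⟩
    rintro _ ⟨n, rfl⟩
    exact hdistb _ M (hM (Set.mem_range_self n))
  have hdist_bddAbove : ∀ y : ℕ → X, MinSeq f t x y →
      IsBoundedUnder (· ≤ ·) atTop (fun n => dist x (y n)) := by
    intro y hy
    obtain ⟨M, hM⟩ := part1 y hy
    exact isBoundedUnder_of ⟨M, fun n => hM (Set.mem_range_self n)⟩
  have hdist_cob_ge : ∀ y : ℕ → X, MinSeq f t x y →
      IsCoboundedUnder (· ≥ ·) atTop (fun n => dist x (y n)) :=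
    fun y hy => (hdist_bddAbove y hy).isCoboundedUnder_ge
  -- uniform limsup bound
  set B := Real.sqrt (2*t*(ft f t x + 1 - C)) with hB
  have hlimsupB : ∀ y : ℕ → X, MinSeq f t x y →
      limsup (fun n => dist x (y n)) atTop ≤ B := by
    intro y hy
    have hev : ∀ᶠ n in atTop, dist x (y n) ≤ B := by
      filter_upwards [hy.eventually (gt_mem_nhds (lt_add_one (ft f t x)))] with n hn
      exact hdistb _ _ hn.le
    exact limsup_le_of_le (hdist_cob_le y) hev
  -- squeeze lemma: sequences with FH close to the infimum are minimizing
  have hnex : Nonempty X := ⟨x⟩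
  have htend1 : Tendsto (fun k : ℕ => ft f t x + 1/(k+1)) atTop (𝓝 (ft f t x)) := by
    simpa using tendsto_one_div_add_atTop_nhds_zero_nat.const_add (ft f t x)
  have hsq : ∀ y : ℕ → X, (∀ n : ℕ, FH f t x (y n) < ft f t x + 1/(n+1)) → MinSeq f t x y := by
    intro y h
    exact tendsto_of_tendsto_of_tendsto_of_le_of_le tendsto_const_nhds htend1
      (fun n => hftle (y n)) (fun n => (h n).le)
  have hlt_self : ∀ k : ℕ, ft f t x < ft f t x + 1/(k+1) := by
    intro k
    have : (0:ℝ) < 1/(k+1) := by positivity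
    linarith
  -- existence of a minimizing sequence
  have hex : ∃ y : ℕ → X, MinSeq f t x y := by
    have hch : ∀ n : ℕ, ∃ y : X, FH f t x y < ft f t x + 1/(n+1) := by
      intro n
      have hlt := hlt_self n
      rw [hfteq] at hlt
      obtain ⟨y, hy⟩ := exists_lt_of_ciInf_lt hlt
      exact ⟨y, by rw [hfteq]; exact hy⟩
    choose y hy using hch
    exact ⟨y, hsq y hy⟩
  obtain ⟨y0, hy0⟩ := hex
  -- the sets
  set SP := { L : ℝ | ∃ y : ℕ → X, MinSeq f t x y ∧
    Filter.limsup (fun n => dist x (y n)) atTop = L } with hSP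
  set SM := { L : ℝ | ∃ y : ℕ → X, MinSeq f t x y ∧
    Filter.liminf (fun n => dist x (y n)) atTop = L } with hSM
  have hSPne : SP.Nonempty := ⟨_, y0, hy0, rfl⟩
  have hSMne : SM.Nonempty := ⟨_, y0, hy0, rfl⟩
  have hSPbdd : BddAbove SP := by
    refine ⟨B, ?_⟩
    rintro L ⟨y, hy, rfl⟩
    exact hlimsupB y hy
  have hSMbdd : BddBelow SM := by
    refine ⟨0, ?_⟩
    rintro L ⟨y, hy, rfl⟩
    exact le_liminf_of_le (hdist_cob_ge y hy) (Eventually.of_forall fun n => dist_nonneg)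
  refine ⟨part1, ?_, ?_⟩
  · -- Dplus attained
    set s := sSup SP with hs
    have hch : ∀ k : ℕ, ∃ p : X,
        FH f t x p < ft f t x + 1/(k+1) ∧ s - 1/(k+1) < dist x p := by
      intro k
      have hpos : (0:ℝ) < 1/(k+1) := by positivity
      obtain ⟨L, hLS, hLlt⟩ := exists_lt_of_lt_csSup hSPne (sub_lt_self s hpos)
      obtain ⟨z, hz, hzl⟩ := hLS
      have hfreq : ∃ᶠ n in atTop, s - 1/(k+1) < dist x (z n) :=
        frequently_lt_of_lt_limsup (hdist_cob_le z) (by rw [hzl]; exact hLlt)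
      have hev : ∀ᶠ n in atTop, FH f t x (z n) < ft f t x + 1/(k+1) :=
        hz.eventually (gt_mem_nhds (hlt_self k))
      obtain ⟨n, h1, h2⟩ := (hfreq.and_eventually hev).exists
      exact ⟨z n, h2, h1⟩
    choose y hy1 hy2 using hch
    have hymin : MinSeq f t x y := hsq y hy1
    have htend2 : Tendsto (fun k : ℕ => s - 1/(k+1)) atTop (𝓝 s) := by
      simpa using tendsto_one_div_add_atTop_nhds_zero_nat.const_sub s
    have hge : s ≤ limsup (fun k => dist x (y k)) atTop := by
      have h1 : s ≤ liminf (fun k => dist x (y k)) atTop := by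
        rw [← htend2.liminf_eq]
        exact liminf_le_liminf (Eventually.of_forall fun k => (hy2 k).le)
          (htend2.isBoundedUnder_ge) (hdist_cob_ge y hymin)
      exact h1.trans (liminf_le_limsup (hdist_bddAbove y hymin) (hdist_bddBelow y))
    have hle : limsup (fun k => dist x (y k)) atTop ≤ s :=
      le_csSup hSPbdd ⟨y, hymin, rfl⟩
    have heq : limsup (fun k => dist x (y k)) atTop = s := le_antisymm hle hge
    refine ⟨y, hymin, heq, fun z hz => ?_⟩
    rw [heq]
    exact le_csSup hSPbdd ⟨z, hz, rfl⟩
  · -- Dminus attained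
    set s := sInf SM with hs
    have hch : ∀ k : ℕ, ∃ p : X,
        FH f t x p < ft f t x + 1/(k+1) ∧ dist x p < s + 1/(k+1) := by
      intro k
      have hpos : (0:ℝ) < 1/(k+1) := by positivity
      obtain ⟨L, hLS, hLlt⟩ := exists_lt_of_csInf_lt hSMne (lt_add_of_pos_right s hpos)
      obtain ⟨z, hz, hzl⟩ := hLS
      have hfreq : ∃ᶠ n in atTop, dist x (z n) < s + 1/(k+1) :=
        frequently_lt_of_liminf_lt (hdist_cob_ge z hz) (by rw [hzl]; exact hLlt)
      have hev : ∀ᶠ n in atTop, FH f t x (z n) < ft f t x + 1/(k+1) :=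
        hz.eventually (gt_mem_nhds (hlt_self k))
      obtain ⟨n, h1, h2⟩ := (hfreq.and_eventually hev).exists
      exact ⟨z n, h2, h1⟩
    choose y hy1 hy2 using hch
    have hymin : MinSeq f t x y := hsq y hy1
    have htend2 : Tendsto (fun k : ℕ => s + 1/(k+1)) atTop (𝓝 s) := by
      simpa using tendsto_one_div_add_atTop_nhds_zero_nat.const_add s
    have hle : liminf (fun k => dist x (y k)) atTop ≤ s := by
      have h1 : limsup (fun k => dist x (y k)) atTop ≤ s := by
        rw [← htend2.limsup_eq]
        exact limsup_le_limsup (Eventually.of_forall fun k => (hy2 k).le)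
          (hdist_cob_le y) (htend2.isBoundedUnder_le)
      exact (liminf_le_limsup (hdist_bddAbove y hymin) (hdist_bddBelow y)).trans h1
    have hge : s ≤ liminf (fun k => dist x (y k)) atTop :=
      csInf_le hSMbdd ⟨y, hymin, rfl⟩
    have heq : liminf (fun k => dist x (y k)) atTop = s := le_antisymm hle hge
    refine ⟨y, hymin, heq, fun z hz => ?_⟩
    rw [heq]
    exact csInf_le hSMbdd ⟨z, hz, rfl⟩
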